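/- arXiv:2012.05984 — 5 statements merged into one kernel-verified Lean document; each statement's English description precedes it below -/
import Mathlib

section
/- If positive integers a₁ ≤ a₂ ≤ a₃ ≤ a₄ satisfy m/n = 1/a₁ + 1/a₂ + 1/a₃ + 1/a₄ for positive integers m, n, then a₃ ≤ 96n⁴/m². -/
theorem stmt_2 (m n a₁ a₂ a₃ a₄ : ℕ) (hm : 0 < m) (hn : 0 < n)
    (h1 : 0 < a₁) (h2 : 0 < a₂) (h3 : 0 < a₃) (h4 : 0 < a₄)
    (h12 : a₁ ≤ a₂) (h23 : a₂ ≤ a₃) (h34 : a₃ ≤ a₄)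
    (heq : (m : ℚ) / n = 1 / a₁ + 1 / a₂ + 1 / a₃ + 1 / a₄) :
    (a₃ : ℚ) ≤ 96 * n ^ 4 / m ^ 2 := by
  have hn' : (0:ℚ) < n := by exact_mod_cast hn
  have hm' : (0:ℚ) < m := by exact_mod_cast hm
  have ha1 : (0:ℚ) < a₁ := by exact_mod_cast h1
  have ha2 : (0:ℚ) < a₂ := by exact_mod_cast h2
  have ha3 : (0:ℚ) < a₃ := by exact_mod_cast h3
  have ha4 : (0:ℚ) < a₄ := by exact_mod_cast h4
  have h12' : (a₁:ℚ) ≤ a₂ := by exact_mod_cast h12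
  have h23' : (a₂:ℚ) ≤ a₃ := by exact_mod_cast h23
  have h34' : (a₃:ℚ) ≤ a₄ := by exact_mod_cast h34
  have i2 : (1:ℚ)/a₂ ≤ 1/a₁ := one_div_le_one_div_of_le ha1 h12'
  have i3 : (1:ℚ)/a₃ ≤ 1/a₂ := one_div_le_one_div_of_le ha2 h23'
  have i4 : (1:ℚ)/a₄ ≤ 1/a₃ := one_div_le_one_div_of_le ha3 h34'
  have p2 : (0:ℚ) < 1/a₂ := by positivity
  have p3 : (0:ℚ) < 1/a₃ := by positivity
  have p4 : (0:ℚ) < 1/a₄ := by positivity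
  -- Step 1: m * a₁ ≤ 4 * n
  have e1 : (m:ℚ) * a₁ ≤ 4 * n := by
    have h : (m:ℚ)/n ≤ 4/a₁ := by
      rw [heq]
      have : (4:ℚ)/a₁ = 1/a₁ + 1/a₁ + 1/a₁ + 1/a₁ := by ring
      rw [this]; linarith
    rw [div_le_div_iff₀ hn' ha1] at h
    linarith
  -- Step 2: a₂ ≤ 3 * n * a₁
  have hid1 : (m:ℚ)/n - 1/a₁ = ((m:ℚ)*a₁ - n)/(n*a₁) := by
    field_simp
  have hlt1 : (n:ℚ) < m * a₁ := by
    have h : (1:ℚ)/a₁ < m/n := by rw [heq]; linarith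
    rw [div_lt_div_iff₀ ha1 hn'] at h; linarith
  have hge1 : (n:ℚ) + 1 ≤ m * a₁ := by
    have : n < m * a₁ := by exact_mod_cast hlt1
    exact_mod_cast this
  have e2 : (a₂:ℚ) ≤ 3 * n * a₁ := by
    have hr1 : (1:ℚ)/(n*a₁) ≤ m/n - 1/a₁ := by
      rw [hid1]
      apply div_le_div_of_nonneg_right ?_ (by positivity) |>.trans_eq rfl
      linarith
    have hr2 : (m:ℚ)/n - 1/a₁ ≤ 3/a₂ := by
      rw [heq]
      have : (3:ℚ)/a₂ = 1/a₂ + 1/a₂ + 1/a₂ := by ring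
      rw [this]; linarith
    have h : (1:ℚ)/(n*a₁) ≤ 3/a₂ := hr1.trans hr2
    rw [div_le_div_iff₀ (by positivity) ha2] at h
    linarith
  -- Step 3: a₃ ≤ 2 * n * a₁ * a₂
  have hid2 : (m:ℚ)/n - 1/a₁ - 1/a₂ =
      (((m:ℤ)*a₁*a₂ - n*a₂ - n*a₁ : ℤ) : ℚ)/(n*a₁*a₂) := by
    push_cast; field_simp
  have hpos2 : (0:ℚ) < (((m:ℤ)*a₁*a₂ - n*a₂ - n*a₁ : ℤ) : ℚ) := by
    have h : (0:ℚ) < m/n - 1/a₁ - 1/a₂ := by rw [heq]; linarith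
    rw [hid2] at h
    have hd : (0:ℚ) < (n:ℚ)*a₁*a₂ := by positivity
    exact (div_pos_iff.mp h).resolve_right (by push_neg; intro hx; linarith) |>.1
  have hge2 : (1:ℚ) ≤ (((m:ℤ)*a₁*a₂ - n*a₂ - n*a₁ : ℤ) : ℚ) := by
    have : (0:ℤ) < (m:ℤ)*a₁*a₂ - n*a₂ - n*a₁ := by exact_mod_cast hpos2
    exact_mod_cast this
  have e3 : (a₃:ℚ) ≤ 2 * n * a₁ * a₂ := by
    have hr1 : (1:ℚ)/(n*a₁*a₂) ≤ m/n - 1/a₁ - 1/a₂ := by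
      rw [hid2]
      exact div_le_div_of_nonneg_right hge2 (by positivity) |>.trans_eq rfl
    have hr2 : (m:ℚ)/n - 1/a₁ - 1/a₂ ≤ 2/a₃ := by
      rw [heq]
      have : (2:ℚ)/a₃ = 1/a₃ + 1/a₃ := by ring
      rw [this]; linarith
    have h : (1:ℚ)/(n*a₁*a₂) ≤ 2/a₃ := hr1.trans hr2
    rw [div_le_div_iff₀ (by positivity) ha3] at h
    linarith
  -- Conclude
  rw [le_div_iff₀ (by positivity)]
  nlinarith [mul_pos hn' ha1, mul_pos hm' ha1, sq_nonneg ((m:ℚ)*a₁ - 4*n),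
    mul_le_mul_of_nonneg_left e2 (le_of_lt (mul_pos hn' ha1)),
    mul_le_mul e1 e1 (by positivity) (by positivity)]
end

section
/- The number of quadruples (a₁,a₂,a₃,a₄) of positive integers with a₁ ≤ a₂ ≤ a₃ ≤ a₄ and m/n = 1/a₁ + 1/a₂ + 1/a₃ + 1/a₄ is at most the number of triples (a₁,a₂,a₃) with a₁ ≤ 4n/m, a₂ ≤ 12n²/m², a₃ ≤ 96n⁴/m² times 1; in particular f₄(m,n) ≤ (4n/m)·(12n²/m)·(96n⁴/m²). -/
set_option maxHeartbeats 2000000 in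
theorem stmt_7 (m n : ℕ) (hm : 0 < m) (hn : 0 < n) :
    ({a : Fin 4 → ℕ | (∀ i, 0 < a i) ∧ (∀ i j : Fin 4, i ≤ j → a i ≤ a j) ∧
      (m : ℚ) / n = ∑ i : Fin 4, 1 / (a i : ℚ)}.ncard : ℚ) ≤
    (4 * n / m) * (12 * n ^ 2 / m) * (96 * n ^ 4 / m ^ 2) := by
  set S : Set (Fin 4 → ℕ) := {a : Fin 4 → ℕ | (∀ i, 0 < a i) ∧ (∀ i j : Fin 4, i ≤ j → a i ≤ a j) ∧
      (m : ℚ) / n = ∑ i : Fin 4, 1 / (a i : ℚ)} with hS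
  set N₁ : ℕ := 4 * n / m with hN₁
  set N₂ : ℕ := 12 * n ^ 2 / m with hN₂
  set N₃ : ℕ := 96 * n ^ 4 / m ^ 2 with hN₃
  set T : Finset (ℕ × ℕ × ℕ) := Finset.Icc 1 N₁ ×ˢ (Finset.Icc 1 N₂ ×ˢ Finset.Icc 1 N₃) with hT
  set f : (Fin 4 → ℕ) → ℕ × ℕ × ℕ := fun a => (a 0, a 1, a 2) with hf
  -- key bounds for elements of S
  have key : ∀ a ∈ S, a 0 * m ≤ 4 * n ∧ a 1 * m ≤ 12 * n ^ 2 ∧ a 2 * m ^ 2 ≤ 96 * n ^ 4 := by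
    intro a ha
    obtain ⟨hpos, hmono, hq⟩ := ha
    rw [Fin.sum_univ_four] at hq
    have h0 : (0:ℚ) < a 0 := by exact_mod_cast hpos 0
    have h1 : (0:ℚ) < a 1 := by exact_mod_cast hpos 1
    have h2 : (0:ℚ) < a 2 := by exact_mod_cast hpos 2
    have h3 : (0:ℚ) < a 3 := by exact_mod_cast hpos 3
    have hnQ : (0:ℚ) < n := by exact_mod_cast hn
    have hmQ : (0:ℚ) < m := by exact_mod_cast hm
    have e01 : (a 0 : ℚ) ≤ a 1 := by exact_mod_cast hmono 0 1 (by decide)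
    have e12 : (a 1 : ℚ) ≤ a 2 := by exact_mod_cast hmono 1 2 (by decide)
    have e23 : (a 2 : ℚ) ≤ a 3 := by exact_mod_cast hmono 2 3 (by decide)
    -- cleared equation
    have heq : (m:ℚ) * (a 0 * a 1 * a 2 * a 3) =
        n * (a 1 * a 2 * a 3 + a 0 * a 2 * a 3 + a 0 * a 1 * a 3 + a 0 * a 1 * a 2) := by
      field_simp at hq
      linarith [hq]
    -- Step A : m * a0 ≤ 4 n
    have hA : (m:ℚ) * a 0 ≤ 4 * n := by
      have r1 : 1 / (a 1 : ℚ) ≤ 1 / a 0 := one_div_le_one_div_of_le h0 e01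
      have r2 : 1 / (a 2 : ℚ) ≤ 1 / a 0 := one_div_le_one_div_of_le h0 (le_trans e01 e12)
      have r3 : 1 / (a 3 : ℚ) ≤ 1 / a 0 := one_div_le_one_div_of_le h0 (le_trans (le_trans e01 e12) e23)
      have h4 : (4:ℚ) / a 0 = 4 * (1 / (a 0:ℚ)) := by ring
      have : (m:ℚ)/n ≤ 4 / a 0 := by
        rw [hq, h4]; linarith
      rw [div_le_div_iff₀ hnQ h0] at this
      linarith
    -- Step B : n + 1 ≤ m * a0
    have hB : (n:ℚ) + 1 ≤ m * a 0 := by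
      have : 1 / (a 0:ℚ) < m / n := by
        rw [hq]
        have := one_div_pos.mpr h1
        have := one_div_pos.mpr h2
        have := one_div_pos.mpr h3
        linarith
      rw [div_lt_div_iff₀ h0 hnQ] at this
      have h' : (n:ℚ) < m * a 0 := by linarith
      have h'' : (n:ℕ) < m * a 0 := by exact_mod_cast h'
      have := Nat.succ_le_of_lt h''
      exact_mod_cast this
    -- Step C : a1 ≤ 3 n a0
    have hC : (a 1 : ℚ) ≤ 3 * n * a 0 := by
      -- m/n - 1/a0 ≥ 1/(n a0) and ≤ 3/a1
      have hlb : 1 / ((n:ℚ) * a 0) ≤ (m:ℚ)/n - 1/(a 0) := by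
        rw [div_sub_div _ _ (ne_of_gt hnQ) (ne_of_gt h0), div_le_div_iff₀ (by positivity) (by positivity)]
        have key1 : (1:ℚ) ≤ m * a 0 - n := by linarith
        nlinarith [mul_le_mul_of_nonneg_right key1 (le_of_lt (mul_pos hnQ h0))]
      have hub : (m:ℚ)/n - 1/(a 0) ≤ 3 / a 1 := by
        have r2 : 1 / (a 2 : ℚ) ≤ 1 / a 1 := one_div_le_one_div_of_le h1 e12
        have r3 : 1 / (a 3 : ℚ) ≤ 1 / a 1 := one_div_le_one_div_of_le h1 (le_trans e12 e23)
        have h3a : (3:ℚ) / a 1 = 3 * (1 / (a 1:ℚ)) := by ring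
        rw [hq, h3a]; linarith
      have := le_trans hlb hub
      rw [div_le_div_iff₀ (by positivity) h1] at this
      linarith
    -- Step D : n*a0 + n*a1 + 1 ≤ m*a0*a1
    have hD : (n:ℚ) * a 0 + n * a 1 + 1 ≤ m * (a 0) * (a 1) := by
      have : 1/(a 0:ℚ) + 1/(a 1) < m / n := by
        rw [hq]
        have := one_div_pos.mpr h2
        have := one_div_pos.mpr h3
        linarith
      have h' : ((a 1 : ℚ) + a 0) / (a 0 * a 1) < m / n := by
        rw [div_add_div _ _ (ne_of_gt h0) (ne_of_gt h1)] at this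
        convert this using 2
        ring
      rw [div_lt_div_iff₀ (by positivity) hnQ] at h'
      have h'' : n * a 0 + n * a 1 < m * (a 0 * a 1) := by
        have : ((n * a 0 + n * a 1 : ℕ) : ℚ) < ((m * (a 0 * a 1) : ℕ) : ℚ) := by
          push_cast; nlinarith
        exact_mod_cast this
      have q : ((n * a 0 + n * a 1 + 1 : ℕ) : ℚ) ≤ ((m * (a 0 * a 1) : ℕ) : ℚ) := by
        exact_mod_cast Nat.succ_le_of_lt h''
      push_cast at q
      nlinarith [q]
    -- Step E : a2 ≤ 2 n a0 a1
    have hE : (a 2 : ℚ) ≤ 2 * n * a 0 * a 1 := by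
      have hlb : 1 / ((n:ℚ) * a 0 * a 1) ≤ (m:ℚ)/n - 1/(a 0) - 1/(a 1) := by
        have expand : (m:ℚ)/n - 1/(a 0) - 1/(a 1)
            = (m * a 0 * a 1 - n * a 1 - n * a 0) / (n * a 0 * a 1) := by
          field_simp
        rw [expand, div_le_div_iff₀ (by positivity) (by positivity)]
        have key1 : (1:ℚ) ≤ m * a 0 * a 1 - n * a 1 - n * a 0 := by linarith
        nlinarith [mul_le_mul_of_nonneg_right key1
          (by positivity : (0:ℚ) ≤ (n:ℚ) * a 0 * a 1)]
      have hub : (m:ℚ)/n - 1/(a 0) - 1/(a 1) ≤ 2 / a 2 := by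
        have r3 : 1 / (a 3 : ℚ) ≤ 1 / a 2 := one_div_le_one_div_of_le h2 e23
        have h2a : (2:ℚ) / a 2 = 2 * (1 / (a 2:ℚ)) := by ring
        rw [hq, h2a]; linarith
      have := le_trans hlb hub
      rw [div_le_div_iff₀ (by positivity) h2] at this
      linarith
    have g1 : (a 1 : ℚ) * m ≤ 12 * n ^ 2 := by
      nlinarith [mul_le_mul_of_nonneg_right hC (le_of_lt hmQ),
        mul_le_mul_of_nonneg_left hA (by positivity : (0:ℚ) ≤ 3 * (n:ℚ))]
    have g2 : (a 2 : ℚ) * m ^ 2 ≤ 96 * n ^ 4 := by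
      nlinarith [mul_le_mul_of_nonneg_right hE (by positivity : (0:ℚ) ≤ (m:ℚ) ^ 2),
        mul_le_mul_of_nonneg_left
          (mul_le_mul hA g1 (by positivity) (by positivity))
          (by positivity : (0:ℚ) ≤ 2 * (n:ℚ))]
    refine ⟨?_, ?_, ?_⟩
    · have h' : ((a 0 * m : ℕ) : ℚ) ≤ ((4 * n : ℕ) : ℚ) := by push_cast; linarith
      exact_mod_cast h'
    · have h' : ((a 1 * m : ℕ) : ℚ) ≤ ((12 * n ^ 2 : ℕ) : ℚ) := by push_cast; linarith
      exact_mod_cast h'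
    · have h' : ((a 2 * m ^ 2 : ℕ) : ℚ) ≤ ((96 * n ^ 4 : ℕ) : ℚ) := by push_cast; linarith
      exact_mod_cast h'
  -- image of S under f lies in T
  have himg : f '' S ⊆ ↑T := by
    rintro _ ⟨a, ha, rfl⟩
    obtain ⟨hA, hB, hC⟩ := key a ha
    obtain ⟨hpos, -, -⟩ := ha
    have : f a = (a 0, a 1, a 2) := rfl
    rw [Finset.mem_coe, this, hT, Finset.mem_product, Finset.mem_product,
      Finset.mem_Icc, Finset.mem_Icc, Finset.mem_Icc]
    refine ⟨⟨hpos 0, ?_⟩, ⟨hpos 1, ?_⟩, ⟨hpos 2, ?_⟩⟩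
    · rw [hN₁, Nat.le_div_iff_mul_le hm]; exact hA
    · rw [hN₂, Nat.le_div_iff_mul_le hm]; exact hB
    · rw [hN₃, Nat.le_div_iff_mul_le (by positivity)]; exact hC
  -- injectivity of f on S
  have hinj : Set.InjOn f S := by
    intro a ha b hb hab
    obtain ⟨hpa, -, hqa⟩ := ha
    obtain ⟨hpb, -, hqb⟩ := hb
    simp only [hf, Prod.mk.injEq] at hab
    obtain ⟨e0, e1, e2⟩ := hab
    rw [Fin.sum_univ_four] at hqa hqb
    have h3 : (a 3 : ℚ) = b 3 := by
      have ha3 : (0:ℚ) < a 3 := by exact_mod_cast hpa 3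
      have hb3 : (0:ℚ) < b 3 := by exact_mod_cast hpb 3
      have : 1 / (a 3 : ℚ) = 1 / (b 3 : ℚ) := by
        rw [e0, e1, e2] at hqa
        linarith [hqa.symm.trans hqb]
      field_simp at this
      first
        | exact this | exact this.symm
        | exact_mod_cast this | exact_mod_cast this.symm
        | linarith
    have h3' : a 3 = b 3 := by exact_mod_cast h3
    funext i
    fin_cases i <;> assumption
  have hcard : S.ncard ≤ T.card := by
    rw [← Set.ncard_image_of_injOn hinj]
    calc (f '' S).ncard ≤ (↑T : Set (ℕ × ℕ × ℕ)).ncard :=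
          Set.ncard_le_ncard himg T.finite_toSet
      _ = T.card := Set.ncard_coe_finset T
  have hTcard : T.card = N₁ * N₂ * N₃ := by
    simp [hT, Nat.card_Icc, mul_assoc]
  have hcard' : S.ncard ≤ N₁ * N₂ * N₃ := hTcard ▸ hcard
  calc (S.ncard : ℚ) ≤ ((N₁ * N₂ * N₃ : ℕ) : ℚ) := by exact_mod_cast hcard'
    _ ≤ (4 * n / m) * (12 * n ^ 2 / m) * (96 * n ^ 4 / m ^ 2) := by
        push_cast
        have b1 : (N₁ : ℚ) ≤ 4 * n / m := by
          rw [hN₁]; push_cast [Nat.cast_div_le]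
          calc ((4 * n / m : ℕ) : ℚ) ≤ ((4 * n : ℕ) : ℚ) / ((m:ℕ):ℚ) := Nat.cast_div_le
            _ = 4 * n / m := by push_cast; ring
        have b2 : (N₂ : ℚ) ≤ 12 * n ^ 2 / m := by
          calc ((12 * n ^ 2 / m : ℕ) : ℚ) ≤ ((12 * n ^ 2 : ℕ) : ℚ) / ((m:ℕ):ℚ) := Nat.cast_div_le
            _ = 12 * n ^ 2 / m := by push_cast; ring
        have b3 : (N₃ : ℚ) ≤ 96 * n ^ 4 / m ^ 2 := by
          calc ((96 * n ^ 4 / m ^ 2 : ℕ) : ℚ) ≤ ((96 * n ^ 4 : ℕ) : ℚ) / ((m ^ 2:ℕ):ℚ) := Nat.cast_div_le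
            _ = 96 * n ^ 4 / m ^ 2 := by push_cast; ring
        have p1 : (0:ℚ) ≤ (N₁ : ℚ) := by positivity
        have p2 : (0:ℚ) ≤ (N₂ : ℚ) := by positivity
        have p3 : (0:ℚ) ≤ (N₃ : ℚ) := by positivity
        have q2 : (0:ℚ) ≤ 12 * (n:ℚ) ^ 2 / m := by positivity
        have q3 : (0:ℚ) ≤ 96 * (n:ℚ) ^ 4 / m ^ 2 := by positivity
        exact mul_le_mul (mul_le_mul b1 b2 p2 (by positivity)) b3 p3 (by positivity)
end

section
/- Let t₁, t₂, t₃, t₄ be positive integers and define, for each nonempty subset J of {1,2,3,4}, the relative greatest common divisors x_J recursively by x_{1,2,3,4} = gcd(t₁,t₂,t₃,t₄) and x_J = gcd(tᵢ : i ∈ J) / ∏_{J ⊊ K} x_K. Then for all J, K ⊆ {1,2,3,4} with J ⊄ K and K ⊄ J, gcd(x_J, x_K) = 1. -/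
/-!
The recursion says `∏_{L ⊇ S} x_L = gcd_S t` for nonempty `S`, so
`x_S · gcd_M t ∣ gcd_S t` whenever `S ⊊ M`. Incomparable `J`, `K` are both proper subsets of
`M = J ∪ K`, hence `gcd(x_J, x_K) · gcd_M t` divides `gcd(gcd_J t, gcd_K t) = gcd_M t ≠ 0`.
-/

open Finset

theorem Finset.filter_ssubset_eq_erase_filter_subset {ι : Type*} [DecidableEq ι]
    (s : Finset (Finset ι)) (S : Finset ι) :
    s.filter (S ⊂ ·) = (s.filter (S ⊆ ·)).erase S := by
  ext L
  simp only [mem_filter, mem_erase, Finset.ssubset_iff_subset_ne]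
  tauto

section

variable {ι α : Type*} [Fintype ι] [DecidableEq ι]
  [CommMonoidWithZero α] [NormalizedGCDMonoid α]
  {t : ι → α} {x : Finset ι → α}
  (hrec : ∀ J : Finset ι, J.Nonempty →
    x J * ∏ K ∈ univ.powerset.filter (fun K => J ⊂ K), x K = J.gcd t)
include hrec

theorem prod_supersets_eq_gcd {S : Finset ι} (hS : S.Nonempty) :
    ∏ L ∈ univ.powerset.filter (fun L => S ⊆ L), x L = S.gcd t := by
  rw [← hrec S hS, filter_ssubset_eq_erase_filter_subset, mul_prod_erase]
  simp

theorem mul_gcd_dvd_gcd_of_ssubset {S M : Finset ι} (hS : S.Nonempty) (hSM : S ⊂ M) :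
    x S * M.gcd t ∣ S.gcd t := by
  rw [← hrec S hS, ← prod_supersets_eq_gcd hrec (hS.mono hSM.subset)]
  refine mul_dvd_mul_left _ (prod_dvd_prod_of_subset _ _ _ ?_)
  exact monotone_filter_right _ fun L _ hML => hSM.trans_le hML

theorem gcd_eq_one_of_not_subset {J K : Finset ι} (hJK : ¬ J ⊆ K) (hKJ : ¬ K ⊆ J)
    (ht : (J ∪ K).gcd t ≠ 0) : gcd (x J) (x K) = 1 := by
  have hJ : J.Nonempty := nonempty_iff_ne_empty.2 fun h => hJK (h ▸ empty_subset K)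
  have hK : K.Nonempty := nonempty_iff_ne_empty.2 fun h => hKJ (h ▸ empty_subset J)
  have hdvd : gcd (x J) (x K) * (J ∪ K).gcd t ∣ 1 * (J ∪ K).gcd t := by
    rw [one_mul]
    conv_rhs => rw [gcd_union]
    exact dvd_gcd
      ((mul_dvd_mul_right (gcd_dvd_left _ _) _).trans
        (mul_gcd_dvd_gcd_of_ssubset hrec hJ (left_lt_sup.2 hKJ)))
      ((mul_dvd_mul_right (gcd_dvd_right _ _) _).trans
        (mul_gcd_dvd_gcd_of_ssubset hrec hK (right_lt_sup.2 hJK)))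
  rw [← _root_.normalize_gcd, normalize_eq_one]
  exact isUnit_of_dvd_one ((mul_dvd_mul_iff_right ht).1 hdvd)

end

theorem stmt_9_general (t : Fin 4 → ℕ) (ht : ∀ i, 0 < t i)
    (x : Finset (Fin 4) → ℕ)
    (hrec : ∀ J : Finset (Fin 4), J.Nonempty →
      x J * ∏ K ∈ Finset.univ.powerset.filter (fun K => J ⊂ K), x K = J.gcd t)
    (J K : Finset (Fin 4))
    (hJK : ¬ J ⊆ K) (hKJ : ¬ K ⊆ J) :
    Nat.gcd (x J) (x K) = 1 := by
  refine gcd_eq_one_of_not_subset hrec hJK hKJ ?_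
  obtain ⟨i, hi, -⟩ := not_subset.1 hJK
  exact fun h => (ht i).ne' (Finset.gcd_eq_zero_iff.1 h i (mem_union_left K hi))

theorem stmt_9 (t : Fin 4 → ℕ) (ht : ∀ i, 0 < t i)
    (x : Finset (Fin 4) → ℕ) (hx : ∀ J : Finset (Fin 4), 0 < x J)
    (hrec : ∀ J : Finset (Fin 4), J.Nonempty →
      x J * ∏ K ∈ Finset.univ.powerset.filter (fun K => J ⊂ K), x K = J.gcd t)
    (J K : Finset (Fin 4)) (hJ : J.Nonempty) (hK : K.Nonempty)
    (hJK : ¬ J ⊆ K) (hKJ : ¬ K ⊆ J) :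
    Nat.gcd (x J) (x K) = 1 :=
  stmt_9_general t ht x hrec J K hJK hKJ
end

section
/- Suppose m/n = 1/a₁ + 1/a₂ + 1/a₃ + 1/a₄ with aᵢ = nᵢtᵢ, nᵢ = gcd(aᵢ, n), and the tᵢ are factored into relative greatest common divisors x_J with all singleton x_i for i ∈ {1,2,3,4}. Then x₁ = x₂ = x₃ = x₄ = 1. -/
set_option linter.unusedVariables false


lemma valA (p m n a₁ a₂ a₃ a₄ : ℕ) (hp : p.Prime) (hm : 0 < m) (hn : 0 < n)
    (h1 : 0 < a₁) (h2 : 0 < a₂) (h3 : 0 < a₃) (h4 : 0 < a₄)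
    (hid : m * (a₁*a₂*a₃*a₄) = n*(a₂*a₃*a₄) + n*(a₁*a₃*a₄) + n*(a₁*a₂*a₄) + n*(a₁*a₂*a₃)) :
    (a₁ / Nat.gcd a₁ n).factorization p ≤
      max ((a₂ / Nat.gcd a₂ n).factorization p)
        (max ((a₃ / Nat.gcd a₃ n).factorization p) ((a₄ / Nat.gcd a₄ n).factorization p)) := by
  by_contra hcon
  push_neg at hcon
  set g₁ := Nat.gcd a₁ n with hg1
  set g₂ := Nat.gcd a₂ n with hg2
  set g₃ := Nat.gcd a₃ n with hg3
  set g₄ := Nat.gcd a₄ n with hg4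
  have hg1p : 0 < g₁ := Nat.gcd_pos_of_pos_left _ h1
  have hg2p : 0 < g₂ := Nat.gcd_pos_of_pos_left _ h2
  have hg3p : 0 < g₃ := Nat.gcd_pos_of_pos_left _ h3
  have hg4p : 0 < g₄ := Nat.gcd_pos_of_pos_left _ h4
  set t₁ := a₁ / g₁ with ht1
  set t₂ := a₂ / g₂ with ht2
  set t₃ := a₃ / g₃ with ht3
  set t₄ := a₄ / g₄ with ht4
  have ha1 : a₁ = g₁ * t₁ := (Nat.mul_div_cancel' (Nat.gcd_dvd_left _ _)).symm
  have ha2 : a₂ = g₂ * t₂ := (Nat.mul_div_cancel' (Nat.gcd_dvd_left _ _)).symm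
  have ha3 : a₃ = g₃ * t₃ := (Nat.mul_div_cancel' (Nat.gcd_dvd_left _ _)).symm
  have ha4 : a₄ = g₄ * t₄ := (Nat.mul_div_cancel' (Nat.gcd_dvd_left _ _)).symm
  have ht1p : 0 < t₁ := Nat.div_pos (Nat.le_of_dvd h1 (Nat.gcd_dvd_left _ _)) hg1p
  have ht2p : 0 < t₂ := Nat.div_pos (Nat.le_of_dvd h2 (Nat.gcd_dvd_left _ _)) hg2p
  have ht3p : 0 < t₃ := Nat.div_pos (Nat.le_of_dvd h3 (Nat.gcd_dvd_left _ _)) hg3p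
  have ht4p : 0 < t₄ := Nat.div_pos (Nat.le_of_dvd h4 (Nat.gcd_dvd_left _ _)) hg4p
  -- valuation shorthand
  have vmul : ∀ x y : ℕ, x ≠ 0 → y ≠ 0 →
      ((x*y).factorization) p = x.factorization p + y.factorization p := by
    intro x y hx hy; rw [Nat.factorization_mul hx hy]; simp
  have e2lt : t₂.factorization p < t₁.factorization p := lt_of_le_of_lt le_sup_left hcon
  have e3lt : t₃.factorization p < t₁.factorization p :=
    lt_of_le_of_lt (le_trans le_sup_left le_sup_right) hcon
  have e4lt : t₄.factorization p < t₁.factorization p :=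
    lt_of_le_of_lt (le_trans le_sup_right le_sup_right) hcon
  have he1 : 1 ≤ t₁.factorization p := by omega
  have hpt1 : p ∣ t₁ := by
    have := (hp.pow_dvd_iff_le_factorization ht1p.ne').mpr he1
    simpa using this
  -- p does not divide n / g₁
  have hnd : ¬ p ∣ (n / g₁) := by
    intro hd
    have hgn : g₁ ∣ n := Nat.gcd_dvd_right _ _
    have h1' : g₁ * p ∣ a₁ := by rw [ha1]; exact mul_dvd_mul_left _ hpt1
    have h2' : g₁ * p ∣ n := by
      rw [← Nat.mul_div_cancel' hgn]; exact mul_dvd_mul_left _ hd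
    have hd1 : g₁ * p ∣ g₁ * 1 := by simpa using Nat.dvd_gcd h1' h2'
    have hp2 := hp.two_le
    have : p ∣ 1 := (mul_dvd_mul_iff_left hg1p.ne').mp hd1
    have hple := Nat.le_of_dvd Nat.one_pos this
    omega
  have hvn1 : n.factorization p = g₁.factorization p := by
    have hgn : g₁ ∣ n := Nat.gcd_dvd_right _ _
    have hrew : n = g₁ * (n / g₁) := (Nat.mul_div_cancel' hgn).symm
    have hnz : n / g₁ ≠ 0 := by
      intro h0; rw [h0, mul_zero] at hrew; omega
    rw [hrew, vmul _ _ hg1p.ne' hnz, Nat.factorization_eq_zero_of_not_dvd hnd]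
    simp
  have hg2le : g₂.factorization p ≤ n.factorization p :=
    (Nat.factorization_le_iff_dvd hg2p.ne' hn.ne').mpr (Nat.gcd_dvd_right _ _) p
  have hg3le : g₃.factorization p ≤ n.factorization p :=
    (Nat.factorization_le_iff_dvd hg3p.ne' hn.ne').mpr (Nat.gcd_dvd_right _ _) p
  have hg4le : g₄.factorization p ≤ n.factorization p :=
    (Nat.factorization_le_iff_dvd hg4p.ne' hn.ne').mpr (Nat.gcd_dvd_right _ _) p
  -- valuations of a_i
  have va1 : a₁.factorization p = g₁.factorization p + t₁.factorization p := by
    rw [ha1, vmul _ _ hg1p.ne' ht1p.ne']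
  have va2 : a₂.factorization p = g₂.factorization p + t₂.factorization p := by
    rw [ha2, vmul _ _ hg2p.ne' ht2p.ne']
  have va3 : a₃.factorization p = g₃.factorization p + t₃.factorization p := by
    rw [ha3, vmul _ _ hg3p.ne' ht3p.ne']
  have va4 : a₄.factorization p = g₄.factorization p + t₄.factorization p := by
    rw [ha4, vmul _ _ hg4p.ne' ht4p.ne']
  set k := n.factorization p + a₂.factorization p + a₃.factorization p
      + a₄.factorization p + 1 with hk
  have hane : ∀ x y : ℕ, 0 < x → 0 < y → x * y ≠ 0 := fun x y hx hy => (Nat.mul_pos hx hy).ne'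
  have dLHS : p ^ k ∣ m * (a₁*a₂*a₃*a₄) := by
    rw [hp.pow_dvd_iff_le_factorization (by positivity)]
    rw [vmul _ _ hm.ne' (by positivity), vmul _ _ (by positivity) h4.ne',
      vmul _ _ (by positivity) h3.ne', vmul _ _ h1.ne' h2.ne']
    omega
  have d2 : p ^ k ∣ n * (a₁*a₃*a₄) := by
    rw [hp.pow_dvd_iff_le_factorization (by positivity)]
    rw [vmul _ _ hn.ne' (by positivity), vmul _ _ (by positivity) h4.ne',
      vmul _ _ h1.ne' h3.ne']
    omega
  have d3 : p ^ k ∣ n * (a₁*a₂*a₄) := by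
    rw [hp.pow_dvd_iff_le_factorization (by positivity)]
    rw [vmul _ _ hn.ne' (by positivity), vmul _ _ (by positivity) h4.ne',
      vmul _ _ h1.ne' h2.ne']
    omega
  have d4 : p ^ k ∣ n * (a₁*a₂*a₃) := by
    rw [hp.pow_dvd_iff_le_factorization (by positivity)]
    rw [vmul _ _ hn.ne' (by positivity), vmul _ _ (by positivity) h3.ne',
      vmul _ _ h1.ne' h2.ne']
    omega
  have hsub : p ^ k ∣ m * (a₁*a₂*a₃*a₄) - (n*(a₁*a₃*a₄) + n*(a₁*a₂*a₄) + n*(a₁*a₂*a₃)) :=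
    Nat.dvd_sub dLHS (Nat.dvd_add (Nat.dvd_add d2 d3) d4)
  have harith : ∀ A B C D : ℕ, A + B + C + D - (B + C + D) = A := by intros; omega
  rw [hid, harith] at hsub
  have : k ≤ (n*(a₂*a₃*a₄)).factorization p :=
    (hp.pow_dvd_iff_le_factorization (by positivity)).mp hsub
  rw [vmul _ _ hn.ne' (by positivity), vmul _ _ (by positivity) h4.ne',
    vmul _ _ h2.ne' h3.ne'] at this
  omega


set_option maxHeartbeats 2000000 in
theorem stmt_11 (m n : ℕ) (hm : 0 < m) (hn : 0 < n)
    (a : Fin 4 → ℕ) (ha : ∀ i, 0 < a i)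
    (heq : (m : ℚ) / n = ∑ i : Fin 4, 1 / (a i : ℚ))
    (t : Fin 4 → ℕ) (htdef : ∀ i, t i = a i / Nat.gcd (a i) n)
    (x : Finset (Fin 4) → ℕ) (hx : ∀ J : Finset (Fin 4), 0 < x J)
    (hrec : ∀ J : Finset (Fin 4), J.Nonempty →
      x J * ∏ K ∈ Finset.univ.powerset.filter (fun K => J ⊂ K), x K = J.gcd t) :
    ∀ i : Fin 4, x {i} = 1 := by
  have h0 : (a 0 : ℚ) ≠ 0 := Nat.cast_ne_zero.mpr (ha 0).ne'
  have h1' : (a 1 : ℚ) ≠ 0 := Nat.cast_ne_zero.mpr (ha 1).ne'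
  have h2' : (a 2 : ℚ) ≠ 0 := Nat.cast_ne_zero.mpr (ha 2).ne'
  have h3' : (a 3 : ℚ) ≠ 0 := Nat.cast_ne_zero.mpr (ha 3).ne'
  have hn' : (n : ℚ) ≠ 0 := Nat.cast_ne_zero.mpr hn.ne'
  rw [Fin.sum_univ_four] at heq
  have hid : m * (a 0 * a 1 * a 2 * a 3) = n*(a 1*a 2*a 3) + n*(a 0*a 2*a 3)
      + n*(a 0*a 1*a 3) + n*(a 0*a 1*a 2) := by
    have key : (m : ℚ) * (a 0 * a 1 * a 2 * a 3) = n*(a 1*a 2*a 3) + n*(a 0*a 2*a 3)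
        + n*(a 0*a 1*a 3) + n*(a 0*a 1*a 2) := by
      field_simp at heq
      linear_combination heq
    exact_mod_cast key
  have ht : ∀ i, 0 < t i := by
    intro i
    rw [htdef]
    exact Nat.div_pos (Nat.le_of_dvd (ha i) (Nat.gcd_dvd_left _ _))
      (Nat.gcd_pos_of_pos_left _ (ha i))
  have fx : ∀ J, x J ≠ 0 := fun J => (hx J).ne'
  have ft : ∀ i, t i ≠ 0 := fun i => (ht i).ne'
  have ext : ∀ (J : Finset (Fin 4)) (S : Finset (Finset (Fin 4))), J.Nonempty →
      Finset.univ.powerset.filter (fun K => J ⊂ K) = S →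
      x J * ∏ K ∈ S, x K = J.gcd t := by
    intro J S hJ hS; rw [← hS]; exact hrec J hJ
  intro i
  fin_cases i
  · -- case i = 0
    have hid0 : m * (a 0 * a 1 * a 2 * a 3) = n*(a 1*a 2*a 3) + n*(a 0*a 2*a 3)
        + n*(a 0*a 1*a 3) + n*(a 0*a 1*a 2) := by linear_combination hid
    have hmax : ∀ p : ℕ, p.Prime → (t 0).factorization p ≤
        max ((t 1).factorization p) (max ((t 2).factorization p) ((t 3).factorization p)) := by
      intro p hp
      have := valA p m n (a 0) (a 1) (a 2) (a 3) hp hm hn (ha 0) (ha 1) (ha 2) (ha 3) hid0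
      simpa [← htdef] using this
    by_contra hne
    obtain ⟨p, hp, hpd⟩ := Nat.exists_prime_and_dvd hne
    have hfx : 1 ≤ (x {0}).factorization p :=
      hp.factorization_pos_of_dvd (hx _).ne' hpd
    have h1 := ext {0} {{0,1},{0,2},{0,3},{0,1,2},{0,1,3},{0,2,3},{0,1,2,3}}
      ⟨0, by decide⟩ (by decide)
    have h2 := ext {0,1} {{0,1,2},{0,1,3},{0,1,2,3}} ⟨0, by decide⟩ (by decide)
    have h3 := ext {0,2} {{0,1,2},{0,2,3},{0,1,2,3}} ⟨0, by decide⟩ (by decide)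
    have h4 := ext {0,3} {{0,1,3},{0,2,3},{0,1,2,3}} ⟨0, by decide⟩ (by decide)
    have h5 := ext {0,1,2} {{0,1,2,3}} ⟨0, by decide⟩ (by decide)
    have h6 := ext {0,1,3} {{0,1,2,3}} ⟨0, by decide⟩ (by decide)
    have h7 := ext {0,2,3} {{0,1,2,3}} ⟨0, by decide⟩ (by decide)
    have h8 := ext {0,1,2,3} ({} : Finset (Finset (Fin 4))) ⟨0, by decide⟩ (by decide)
    have F1 := congrArg (fun y : ℕ => y.factorization p) h1
    have F2 := congrArg (fun y : ℕ => y.factorization p) h2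
    have F3 := congrArg (fun y : ℕ => y.factorization p) h3
    have F4 := congrArg (fun y : ℕ => y.factorization p) h4
    have F5 := congrArg (fun y : ℕ => y.factorization p) h5
    have F6 := congrArg (fun y : ℕ => y.factorization p) h6
    have F7 := congrArg (fun y : ℕ => y.factorization p) h7
    have F8 := congrArg (fun y : ℕ => y.factorization p) h8
    simp (config := { decide := true }) only [Finset.prod_insert, Finset.prod_singleton,
      Finset.prod_empty, Finset.gcd_insert, Finset.gcd_singleton, gcd_eq_nat_gcd,
      normalize_eq, mul_one, Finset.mem_insert, Finset.mem_singleton,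
      Nat.factorization_mul, Nat.factorization_gcd, fx, ft, mul_eq_zero,
      Nat.gcd_eq_zero_iff, Finsupp.add_apply, Finsupp.inf_apply,
      ne_eq, not_false_eq_true, or_self, false_or, or_false, and_self, not_and, not_or]
      at F1 F2 F3 F4 F5 F6 F7 F8
    have hmx := hmax p hp
    omega
  · -- case i = 1
    have hid1 : m * (a 1 * a 0 * a 2 * a 3) = n*(a 0*a 2*a 3) + n*(a 1*a 2*a 3)
        + n*(a 1*a 0*a 3) + n*(a 1*a 0*a 2) := by linear_combination hid
    have hmax : ∀ p : ℕ, p.Prime → (t 1).factorization p ≤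
        max ((t 0).factorization p) (max ((t 2).factorization p) ((t 3).factorization p)) := by
      intro p hp
      have := valA p m n (a 1) (a 0) (a 2) (a 3) hp hm hn (ha 1) (ha 0) (ha 2) (ha 3) hid1
      simpa [← htdef] using this
    by_contra hne
    obtain ⟨p, hp, hpd⟩ := Nat.exists_prime_and_dvd hne
    have hfx : 1 ≤ (x {1}).factorization p :=
      hp.factorization_pos_of_dvd (hx _).ne' hpd
    have h1 := ext {1} {{1,0},{1,2},{1,3},{1,0,2},{1,0,3},{1,2,3},{0,1,2,3}}
      ⟨1, by decide⟩ (by decide)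
    have h2 := ext {1,0} {{1,0,2},{1,0,3},{0,1,2,3}} ⟨1, by decide⟩ (by decide)
    have h3 := ext {1,2} {{1,0,2},{1,2,3},{0,1,2,3}} ⟨1, by decide⟩ (by decide)
    have h4 := ext {1,3} {{1,0,3},{1,2,3},{0,1,2,3}} ⟨1, by decide⟩ (by decide)
    have h5 := ext {1,0,2} {{0,1,2,3}} ⟨1, by decide⟩ (by decide)
    have h6 := ext {1,0,3} {{0,1,2,3}} ⟨1, by decide⟩ (by decide)
    have h7 := ext {1,2,3} {{0,1,2,3}} ⟨1, by decide⟩ (by decide)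
    have h8 := ext {0,1,2,3} ({} : Finset (Finset (Fin 4))) ⟨1, by decide⟩ (by decide)
    have F1 := congrArg (fun y : ℕ => y.factorization p) h1
    have F2 := congrArg (fun y : ℕ => y.factorization p) h2
    have F3 := congrArg (fun y : ℕ => y.factorization p) h3
    have F4 := congrArg (fun y : ℕ => y.factorization p) h4
    have F5 := congrArg (fun y : ℕ => y.factorization p) h5
    have F6 := congrArg (fun y : ℕ => y.factorization p) h6
    have F7 := congrArg (fun y : ℕ => y.factorization p) h7
    have F8 := congrArg (fun y : ℕ => y.factorization p) h8
    simp (config := { decide := true }) only [Finset.prod_insert, Finset.prod_singleton,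
      Finset.prod_empty, Finset.gcd_insert, Finset.gcd_singleton, gcd_eq_nat_gcd,
      normalize_eq, mul_one, Finset.mem_insert, Finset.mem_singleton,
      Nat.factorization_mul, Nat.factorization_gcd, fx, ft, mul_eq_zero,
      Nat.gcd_eq_zero_iff, Finsupp.add_apply, Finsupp.inf_apply,
      ne_eq, not_false_eq_true, or_self, false_or, or_false, and_self, not_and, not_or]
      at F1 F2 F3 F4 F5 F6 F7 F8
    have hmx := hmax p hp
    omega
  · -- case i = 2
    have hid2 : m * (a 2 * a 0 * a 1 * a 3) = n*(a 0*a 1*a 3) + n*(a 2*a 1*a 3)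
        + n*(a 2*a 0*a 3) + n*(a 2*a 0*a 1) := by linear_combination hid
    have hmax : ∀ p : ℕ, p.Prime → (t 2).factorization p ≤
        max ((t 0).factorization p) (max ((t 1).factorization p) ((t 3).factorization p)) := by
      intro p hp
      have := valA p m n (a 2) (a 0) (a 1) (a 3) hp hm hn (ha 2) (ha 0) (ha 1) (ha 3) hid2
      simpa [← htdef] using this
    by_contra hne
    obtain ⟨p, hp, hpd⟩ := Nat.exists_prime_and_dvd hne
    have hfx : 1 ≤ (x {2}).factorization p :=
      hp.factorization_pos_of_dvd (hx _).ne' hpd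
    have h1 := ext {2} {{2,0},{2,1},{2,3},{2,0,1},{2,0,3},{2,1,3},{0,1,2,3}}
      ⟨2, by decide⟩ (by decide)
    have h2 := ext {2,0} {{2,0,1},{2,0,3},{0,1,2,3}} ⟨2, by decide⟩ (by decide)
    have h3 := ext {2,1} {{2,0,1},{2,1,3},{0,1,2,3}} ⟨2, by decide⟩ (by decide)
    have h4 := ext {2,3} {{2,0,3},{2,1,3},{0,1,2,3}} ⟨2, by decide⟩ (by decide)
    have h5 := ext {2,0,1} {{0,1,2,3}} ⟨2, by decide⟩ (by decide)
    have h6 := ext {2,0,3} {{0,1,2,3}} ⟨2, by decide⟩ (by decide)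
    have h7 := ext {2,1,3} {{0,1,2,3}} ⟨2, by decide⟩ (by decide)
    have h8 := ext {0,1,2,3} ({} : Finset (Finset (Fin 4))) ⟨2, by decide⟩ (by decide)
    have F1 := congrArg (fun y : ℕ => y.factorization p) h1
    have F2 := congrArg (fun y : ℕ => y.factorization p) h2
    have F3 := congrArg (fun y : ℕ => y.factorization p) h3
    have F4 := congrArg (fun y : ℕ => y.factorization p) h4
    have F5 := congrArg (fun y : ℕ => y.factorization p) h5
    have F6 := congrArg (fun y : ℕ => y.factorization p) h6
    have F7 := congrArg (fun y : ℕ => y.factorization p) h7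
    have F8 := congrArg (fun y : ℕ => y.factorization p) h8
    simp (config := { decide := true }) only [Finset.prod_insert, Finset.prod_singleton,
      Finset.prod_empty, Finset.gcd_insert, Finset.gcd_singleton, gcd_eq_nat_gcd,
      normalize_eq, mul_one, Finset.mem_insert, Finset.mem_singleton,
      Nat.factorization_mul, Nat.factorization_gcd, fx, ft, mul_eq_zero,
      Nat.gcd_eq_zero_iff, Finsupp.add_apply, Finsupp.inf_apply,
      ne_eq, not_false_eq_true, or_self, false_or, or_false, and_self, not_and, not_or]
      at F1 F2 F3 F4 F5 F6 F7 F8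
    have hmx := hmax p hp
    omega
  · -- case i = 3
    have hid3 : m * (a 3 * a 0 * a 1 * a 2) = n*(a 0*a 1*a 2) + n*(a 3*a 1*a 2)
        + n*(a 3*a 0*a 2) + n*(a 3*a 0*a 1) := by linear_combination hid
    have hmax : ∀ p : ℕ, p.Prime → (t 3).factorization p ≤
        max ((t 0).factorization p) (max ((t 1).factorization p) ((t 2).factorization p)) := by
      intro p hp
      have := valA p m n (a 3) (a 0) (a 1) (a 2) hp hm hn (ha 3) (ha 0) (ha 1) (ha 2) hid3
      simpa [← htdef] using this
    by_contra hne
    obtain ⟨p, hp, hpd⟩ := Nat.exists_prime_and_dvd hne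
    have hfx : 1 ≤ (x {3}).factorization p :=
      hp.factorization_pos_of_dvd (hx _).ne' hpd
    have h1 := ext {3} {{3,0},{3,1},{3,2},{3,0,1},{3,0,2},{3,1,2},{0,1,2,3}}
      ⟨3, by decide⟩ (by decide)
    have h2 := ext {3,0} {{3,0,1},{3,0,2},{0,1,2,3}} ⟨3, by decide⟩ (by decide)
    have h3 := ext {3,1} {{3,0,1},{3,1,2},{0,1,2,3}} ⟨3, by decide⟩ (by decide)
    have h4 := ext {3,2} {{3,0,2},{3,1,2},{0,1,2,3}} ⟨3, by decide⟩ (by decide)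
    have h5 := ext {3,0,1} {{0,1,2,3}} ⟨3, by decide⟩ (by decide)
    have h6 := ext {3,0,2} {{0,1,2,3}} ⟨3, by decide⟩ (by decide)
    have h7 := ext {3,1,2} {{0,1,2,3}} ⟨3, by decide⟩ (by decide)
    have h8 := ext {0,1,2,3} ({} : Finset (Finset (Fin 4))) ⟨3, by decide⟩ (by decide)
    have F1 := congrArg (fun y : ℕ => y.factorization p) h1
    have F2 := congrArg (fun y : ℕ => y.factorization p) h2
    have F3 := congrArg (fun y : ℕ => y.factorization p) h3
    have F4 := congrArg (fun y : ℕ => y.factorization p) h4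
    have F5 := congrArg (fun y : ℕ => y.factorization p) h5
    have F6 := congrArg (fun y : ℕ => y.factorization p) h6
    have F7 := congrArg (fun y : ℕ => y.factorization p) h7
    have F8 := congrArg (fun y : ℕ => y.factorization p) h8
    simp (config := { decide := true }) only [Finset.prod_insert, Finset.prod_singleton,
      Finset.prod_empty, Finset.gcd_insert, Finset.gcd_singleton, gcd_eq_nat_gcd,
      normalize_eq, mul_one, Finset.mem_insert, Finset.mem_singleton,
      Nat.factorization_mul, Nat.factorization_gcd, fx, ft, mul_eq_zero,
      Nat.gcd_eq_zero_iff, Finsupp.add_apply, Finsupp.inf_apply,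
      ne_eq, not_false_eq_true, or_self, false_or, or_false, and_self, not_and, not_or]
      at F1 F2 F3 F4 F5 F6 F7 F8
    have hmx := hmax p hp
    omega
end

section
/- Suppose m/n = 1/a₁ + 1/a₂ + 1/a₃ + 1/a₄ with aᵢ = nᵢtᵢ, nᵢ = gcd(aᵢ,n), and tᵢ = ∏_{J ∋ i, |J|≥2} x_J. Then m·x₁₂x₁₃x₁₄x₂₃x₂₄x₃₄x₁₂₃x₁₂₄x₁₃₄x₂₃₄x₁₂₃₄ = (n/n₁)x₂₃x₂₄x₃₄x₂₃₄ + (n/n₂)x₁₃x₁₄x₃₄x₁₃₄ + (n/n₃)x₁₂x₁₄x₂₄x₁₂₄ + (n/n₄)x₁₂x₁₃x₂₃x₁₂₃. -/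
theorem stmt_12 (m n n₁ n₂ n₃ n₄ : ℕ) (hm : 0 < m) (hn : 0 < n)
    (hn₁ : n₁ ∣ n) (hn₂ : n₂ ∣ n) (hn₃ : n₃ ∣ n) (hn₄ : n₄ ∣ n)
    (hn₁p : 0 < n₁) (hn₂p : 0 < n₂) (hn₃p : 0 < n₃) (hn₄p : 0 < n₄)
    (x₁₂ x₁₃ x₁₄ x₂₃ x₂₄ x₃₄ x₁₂₃ x₁₂₄ x₁₃₄ x₂₃₄ x₁₂₃₄ : ℕ)
    (hx : 0 < x₁₂ ∧ 0 < x₁₃ ∧ 0 < x₁₄ ∧ 0 < x₂₃ ∧ 0 < x₂₄ ∧ 0 < x₃₄ ∧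
      0 < x₁₂₃ ∧ 0 < x₁₂₄ ∧ 0 < x₁₃₄ ∧ 0 < x₂₃₄ ∧ 0 < x₁₂₃₄)
    (a₁ a₂ a₃ a₄ : ℕ)
    (ha₁ : a₁ = n₁ * (x₁₂ * x₁₃ * x₁₄ * x₁₂₃ * x₁₂₄ * x₁₃₄ * x₁₂₃₄))
    (ha₂ : a₂ = n₂ * (x₁₂ * x₂₃ * x₂₄ * x₁₂₃ * x₁₂₄ * x₂₃₄ * x₁₂₃₄))
    (ha₃ : a₃ = n₃ * (x₁₃ * x₂₃ * x₃₄ * x₁₂₃ * x₁₃₄ * x₂₃₄ * x₁₂₃₄))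
    (ha₄ : a₄ = n₄ * (x₁₄ * x₂₄ * x₃₄ * x₁₂₄ * x₁₃₄ * x₂₃₄ * x₁₂₃₄))
    (heq : (m : ℚ) / n = 1 / a₁ + 1 / a₂ + 1 / a₃ + 1 / a₄) :
    m * (x₁₂ * x₁₃ * x₁₄ * x₂₃ * x₂₄ * x₃₄ * x₁₂₃ * x₁₂₄ * x₁₃₄ * x₂₃₄ * x₁₂₃₄) =
      (n / n₁) * (x₂₃ * x₂₄ * x₃₄ * x₂₃₄) + (n / n₂) * (x₁₃ * x₁₄ * x₃₄ * x₁₃₄) +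
      (n / n₃) * (x₁₂ * x₁₄ * x₂₄ * x₁₂₄) + (n / n₄) * (x₁₂ * x₁₃ * x₂₃ * x₁₂₃) := by
  obtain ⟨h12, h13, h14, h23, h24, h34, h123, h124, h134, h234, h1234⟩ := hx
  subst ha₁ ha₂ ha₃ ha₄
  have hnQ : (n:ℚ) ≠ 0 := Nat.cast_ne_zero.mpr hn.ne'
  have h1 : (n₁:ℚ) ≠ 0 := Nat.cast_ne_zero.mpr hn₁p.ne'
  have h2 : (n₂:ℚ) ≠ 0 := Nat.cast_ne_zero.mpr hn₂p.ne'
  have h3 : (n₃:ℚ) ≠ 0 := Nat.cast_ne_zero.mpr hn₃p.ne'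
  have h4 : (n₄:ℚ) ≠ 0 := Nat.cast_ne_zero.mpr hn₄p.ne'
  have q12 : (x₁₂:ℚ) ≠ 0 := Nat.cast_ne_zero.mpr h12.ne'
  have q13 : (x₁₃:ℚ) ≠ 0 := Nat.cast_ne_zero.mpr h13.ne'
  have q14 : (x₁₄:ℚ) ≠ 0 := Nat.cast_ne_zero.mpr h14.ne'
  have q23 : (x₂₃:ℚ) ≠ 0 := Nat.cast_ne_zero.mpr h23.ne'
  have q24 : (x₂₄:ℚ) ≠ 0 := Nat.cast_ne_zero.mpr h24.ne'
  have q34 : (x₃₄:ℚ) ≠ 0 := Nat.cast_ne_zero.mpr h34.ne'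
  have q123 : (x₁₂₃:ℚ) ≠ 0 := Nat.cast_ne_zero.mpr h123.ne'
  have q124 : (x₁₂₄:ℚ) ≠ 0 := Nat.cast_ne_zero.mpr h124.ne'
  have q134 : (x₁₃₄:ℚ) ≠ 0 := Nat.cast_ne_zero.mpr h134.ne'
  have q234 : (x₂₃₄:ℚ) ≠ 0 := Nat.cast_ne_zero.mpr h234.ne'
  have q1234 : (x₁₂₃₄:ℚ) ≠ 0 := Nat.cast_ne_zero.mpr h1234.ne'
  have hm' : (m:ℚ) = n * (1/(n₁ * (x₁₂ * x₁₃ * x₁₄ * x₁₂₃ * x₁₂₄ * x₁₃₄ * x₁₂₃₄) : ℕ)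
      + 1/(n₂ * (x₁₂ * x₂₃ * x₂₄ * x₁₂₃ * x₁₂₄ * x₂₃₄ * x₁₂₃₄) : ℕ)
      + 1/(n₃ * (x₁₃ * x₂₃ * x₃₄ * x₁₂₃ * x₁₃₄ * x₂₃₄ * x₁₂₃₄) : ℕ)
      + 1/(n₄ * (x₁₄ * x₂₄ * x₃₄ * x₁₂₄ * x₁₃₄ * x₂₃₄ * x₁₂₃₄) : ℕ)) := by
    rw [← heq]; field_simp
  qify [hn₁, hn₂, hn₃, hn₄]
  rw [hm']
  push_cast
  field_simp
end
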